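/- Let Q be a finite acyclic quiver and R a quasi-Frobenius ring. A representation M ∈ Rep(Q,R) is RI-fibrant if and only if M has the following extension property: for every morphism ι : X → Y in Rep(Q,R) such that for each vertex j the component ι_j : X_j → Y_j is injective and a stable equivalence of R-modules, and for every morphism q : X → M, there exists a morphism h : Y → M in Rep(Q,R) with h ∘ ι = q. -/

import Mathlib

open CategoryTheory CategoryTheory.Limits

/-- An `R`-linear map factors through a projective `R`-module. -/
def FactorsThroughProjective (R : Type) [Ring R] {M N : Type} [AddCommGroup M] [Module R M]
    [AddCommGroup N] [Module R N] (f : M →ₗ[R] N) : Prop :=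
  ∃ (P : Type) (_ : AddCommGroup P) (_ : Module R P) (_ : Module.Projective R P)
    (a : M →ₗ[R] P) (b : P →ₗ[R] N), b ∘ₗ a = f

/-- An `R`-linear map is a stable equivalence if it becomes an isomorphism in the stable
module category: there is `g` in the other direction such that `g ∘ f - id` and `f ∘ g - id`
each factor through a projective module. -/
def IsStableEquiv (R : Type) [Ring R] {M N : Type} [AddCommGroup M] [Module R M]
    [AddCommGroup N] [Module R N] (f : M →ₗ[R] N) : Prop :=
  ∃ g : N →ₗ[R] M,
    FactorsThroughProjective R (g ∘ₗ f - LinearMap.id) ∧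
    FactorsThroughProjective R (f ∘ₗ g - LinearMap.id)

/-- A quasi-Frobenius ring: left and right Noetherian, and injective over itself
as a left and as a right module. -/
class IsQuasiFrobenius (R : Type) [Ring R] : Prop where
  noetherian_left : IsNoetherianRing R
  noetherian_right : IsNoetherianRing Rᵐᵒᵖ
  selfInjective_left : Module.Injective R R
  selfInjective_right : Module.Injective Rᵐᵒᵖ Rᵐᵒᵖ

/-- The category of representations of a quiver `V` over a ring `R`:
functors from the free path category on `V` to `R`-modules. -/
abbrev QuivRep (R : Type) [Ring R] (V : Type) [Quiver.{1} V] : Type _ :=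
  Paths V ⥤ ModuleCat.{0} R

namespace QuivRep

variable {R : Type} [Ring R] {V : Type} [Quiver.{1} V]

/-- The `R`-module of a representation at a vertex `j`. -/
abbrev vtx (M : QuivRep R V) (j : V) : ModuleCat R := M.obj ((Paths.of V).obj j)

/-- The structure map of a representation along an arrow `a : i ⟶ j`. -/
abbrev arrowMap (M : QuivRep R V) {i j : V} (a : i ⟶ j) : M.vtx i ⟶ M.vtx j :=
  M.map ((Paths.of V).map a)

/-- The component at a vertex `j` of a morphism of representations. -/
abbrev app {M N : QuivRep R V} (f : M ⟶ N) (j : V) : ↥(M.vtx j) →ₗ[R] ↥(N.vtx j) := (f.app ((Paths.of V).obj j)).hom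

/-- A representation is monic if, at each vertex `j`, the natural map
`⊕_{a : i ⟶ j} M_i → M_j`, `(x_a) ↦ Σ_a m_a (x_a)`, is injective. -/
def IsMonic (M : QuivRep R V) : Prop :=
  ∀ j : V,
    letI : DecidableEq (Σ i : V, i ⟶ j) := Classical.decEq _
    Function.Injective
      (DirectSum.toModule R (Σ i : V, i ⟶ j) (M.vtx j)
        (fun a => ((M.arrowMap a.2).hom : ↥(M.vtx a.1) →ₗ[R] ↥(M.vtx j))))

/-- A representation is RI-fibrant if, at each vertex `j`, the natural map
`M_j → ∏_{a : j ⟶ i} M_i`, `x ↦ (m_a x)_a`, is surjective. -/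
def IsRIFibrant (M : QuivRep R V) : Prop :=
  ∀ j : V,
    Function.Surjective
      (LinearMap.pi
        (fun a : Σ i : V, (j ⟶ i) => ((M.arrowMap a.2).hom : ↥(M.vtx j) →ₗ[R] ↥(M.vtx a.1))))

end QuivRep

/-- A quiver is finite and acyclic: finitely many vertices and arrows, and the only
paths from a vertex to itself are trivial. -/
def IsFiniteAcyclic (V : Type) [Quiver.{1} V] : Prop :=
  Nonempty (Fintype V) ∧ (∀ i j : V, Nonempty (Fintype (i ⟶ j))) ∧
    ∀ (i : V) (p : Quiver.Path i i), p.length = 0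

/-!
Over a quasi-Frobenius ring projective modules are injective (Baer's criterion, using that
ideals are finitely generated). Hence an injective stable equivalence `ι : X → Y` is split,
its complementary idempotent factors through a projective, and `ι` lifts against every
surjection. If `M` is RI-fibrant, an extension of `q : X → M` along a pointwise such `ι` is
built by well-founded recursion down the finite acyclic quiver: at a vertex `j`, the
components already chosen at the targets of the arrows out of `j` pose a lifting problem
against the surjection `M_j → ∏_{a : j → k} M_k`.

Conversely, given elements `c a ∈ M_k` for the arrows `a : i → k`, the representation with
`M_i × R` at `i` and `(x, t) ↦ (m_a x + t • c a, 0)` along `a` contains `M` as a pointwise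
split summand with free complement `R`. A retraction `h` onto `M` produces `z_i = h_i (0, 1)`
with `m_a z_i = c a` for every arrow, which is RI-fibrancy.
-/

section InjectiveModules

variable {R : Type} [Ring R]

theorem Module.Injective.of_retract {M P : Type} [AddCommGroup M] [Module R M]
    [AddCommGroup P] [Module R P] [Module.Injective R M]
    (i : P →ₗ[R] M) (s : M →ₗ[R] P) (hsi : s ∘ₗ i = LinearMap.id) : Module.Injective R P where
  out X Y _ _ _ _ f hf g := by
    obtain ⟨h, hh⟩ := Module.Injective.extension_property R M X Y f hf (i ∘ₗ g)
    refine ⟨s ∘ₗ h, fun x => ?_⟩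
    rw [← LinearMap.comp_apply, LinearMap.comp_assoc, hh, ← LinearMap.comp_assoc, hsi,
      LinearMap.id_comp]

theorem Module.Baer.finsupp [IsNoetherianRing R] {N : Type*} [AddCommGroup N] [Module R N]
    (hN : Module.Baer R N) (κ : Type*) : Module.Baer R (κ →₀ N) := by
  classical
  intro I g
  obtain ⟨s, hs⟩ := Module.Finite.fg_top (R := R) (M := I)
  set T := s.biUnion fun x => (g x).support
  have hT : ∀ y, g y ∈ Finsupp.supported N R (T : Set κ) := by
    have : Submodule.span R (s : Set I) ≤ (Finsupp.supported N R (T : Set κ)).comap g :=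
      Submodule.span_le.2 fun x hx k hk => Finset.mem_biUnion.2 ⟨x, hx, hk⟩
    exact fun y => this (hs ▸ Submodule.mem_top)
  choose e he using fun k => hN I (Finsupp.lapply k ∘ₗ g)
  refine ⟨∑ k ∈ T, Finsupp.lsingle k ∘ₗ e k, fun x hx => Finsupp.ext fun k => ?_⟩
  simp only [LinearMap.sum_apply, LinearMap.comp_apply,
    Finsupp.lsingle_apply, Finsupp.finsetSum_apply, Finsupp.single_apply,
    Finset.sum_ite_eq']
  split_ifs with hk
  · exact he k x hx
  · exact (Finsupp.notMem_support_iff.1 fun h => hk (hT _ h)).symm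

theorem Module.injective_of_projective [IsNoetherianRing R] [Module.Injective R R]
    (P : Type) [AddCommGroup P] [Module R P] [Module.Projective R P] : Module.Injective R P := by
  obtain ⟨s, hs⟩ := Module.projective_def'.1 ‹Module.Projective R P›
  have : Module.Injective R (P →₀ R) :=
    ((Module.Baer.of_injective ‹_›).finsupp P).injective
  exact .of_retract s _ hs

end InjectiveModules

section StableEquiv

variable {R : Type} [Ring R] {X Y : Type} [AddCommGroup X] [Module R X]
  [AddCommGroup Y] [Module R Y] {ι : X →ₗ[R] Y}

theorem IsStableEquiv.exists_retraction [IsNoetherianRing R] [Module.Injective R R]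
    (hι : Function.Injective ι) (hst : IsStableEquiv R ι) :
    ∃ r : Y →ₗ[R] X, r ∘ₗ ι = LinearMap.id := by
  obtain ⟨g', ⟨P, _, _, _, α, β, hβα⟩, -⟩ := hst
  have := Module.injective_of_projective (R := R) P
  obtain ⟨α', hα'⟩ := Module.Injective.extension_property R P X Y ι hι α
  refine ⟨g' - β ∘ₗ α', ?_⟩
  rw [LinearMap.sub_comp, LinearMap.comp_assoc, hα', hβα, sub_sub_cancel]

theorem exists_lift_of_retraction {r : Y →ₗ[R] X} (hr : r ∘ₗ ι = LinearMap.id) {g' : Y →ₗ[R] X}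
    (hg' : FactorsThroughProjective R (ι ∘ₗ g' - LinearMap.id))
    {A B : Type*} [AddCommGroup A] [Module R A] [AddCommGroup B] [Module R B]
    (p : A →ₗ[R] B) (hp : Function.Surjective p) (f : X →ₗ[R] A) (g : Y →ₗ[R] B)
    (hsq : p ∘ₗ f = g ∘ₗ ι) :
    ∃ h : Y →ₗ[R] A, h ∘ₗ ι = f ∧ p ∘ₗ h = g := by
  obtain ⟨Q, _, _, _, γ, δ, hδγ⟩ := hg'
  set e : Y →ₗ[R] Y := LinearMap.id - ι ∘ₗ r
  have hrι : ∀ x, r (ι x) = x := LinearMap.congr_fun hr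
  have heι : ∀ x, e (ι x) = 0 := by simp [e, hrι]
  have hee : ∀ y, e (e y) = e y := by simp [e, hrι]
  have hδγ' : ∀ y, δ (γ y) = ι (g' y) - y := LinearMap.congr_fun hδγ
  have hpf : ∀ x, p (f x) = g (ι x) := LinearMap.congr_fun hsq
  -- `e` kills `ι` and `e ∘ δ ∘ γ ∘ e = -e`, so `e` factors through `Q`, where `g ∘ e` lifts.
  obtain ⟨v, hv⟩ := Module.projective_lifting_property p (g ∘ₗ e ∘ₗ δ) hp
  have hpv : ∀ z, p (v z) = g (e (δ z)) := LinearMap.congr_fun hv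
  refine ⟨f ∘ₗ r - v ∘ₗ γ ∘ₗ e, ?_, LinearMap.ext fun y => ?_⟩
  · ext x
    simp [heι, hrι]
  · have hcomp : e (δ (γ (e y))) = -e y := by rw [hδγ', map_sub, heι, hee, zero_sub]
    simp only [LinearMap.sub_apply, LinearMap.comp_apply, map_sub, hpf, hpv, hcomp, map_neg,
      sub_neg_eq_add, ← map_add]
    simp [e]

theorem IsStableEquiv.exists_lift [IsNoetherianRing R] [Module.Injective R R]
    (hι : Function.Injective ι) (hst : IsStableEquiv R ι)
    {A B : Type*} [AddCommGroup A] [Module R A] [AddCommGroup B] [Module R B]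
    (p : A →ₗ[R] B) (hp : Function.Surjective p) (f : X →ₗ[R] A) (g : Y →ₗ[R] B)
    (hsq : p ∘ₗ f = g ∘ₗ ι) :
    ∃ h : Y →ₗ[R] A, h ∘ₗ ι = f ∧ p ∘ₗ h = g := by
  obtain ⟨r, hr⟩ := hst.exists_retraction hι
  obtain ⟨g', -, hg'⟩ := hst
  exact exists_lift_of_retraction hr hg' p hp f g hsq

theorem isStableEquiv_inl (A P : Type) [AddCommGroup A] [Module R A] [AddCommGroup P] [Module R P]
    [Module.Projective R P] : IsStableEquiv R (LinearMap.inl R A P) := by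
  refine ⟨LinearMap.fst R A P, ⟨P, inferInstance, inferInstance, inferInstance, 0, 0, ?_⟩,
    ⟨P, inferInstance, inferInstance, inferInstance, LinearMap.snd R A P, -LinearMap.inr R A P, ?_⟩⟩
  · ext; simp
  · ext <;> simp

end StableEquiv

theorem WellFounded.exists_family_of_forall_exists {α : Type*} {r : α → α → Prop}
    (wf : WellFounded r) {β : α → Type*} [∀ a, Nonempty (β a)]
    (P : ∀ a, (∀ b, r b a → β b) → β a → Prop)
    (step : ∀ a (F : ∀ b, β b), (∀ b, r b a → P b (fun c _ => F c) (F b)) →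
      ∃ x, P a (fun b _ => F b) x) :
    ∃ F : ∀ a, β a, ∀ a, P a (fun b _ => F b) (F a) := by
  classical
  let F : ∀ a, β a :=
    wf.fix fun a g => if h : ∃ x, P a g x then h.choose else Classical.arbitrary _
  refine ⟨F, fun a => ?_⟩
  induction a using wf.induction with
  | _ a ih =>
    have hex := step a F ih
    rw [show F a = _ from wf.fix_eq _ a, dif_pos hex]
    exact hex.choose_spec

theorem IsFiniteAcyclic.wellFounded {V : Type} [Quiver.{1} V] (hV : IsFiniteAcyclic V) :
    WellFounded fun k j : V => ∃ p : Quiver.Path j k, 0 < p.length := by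
  have : Fintype V := hV.1.some
  have : IsTrans V fun k j => ∃ p : Quiver.Path j k, 0 < p.length :=
    ⟨fun _ _ _ ⟨p, hp⟩ ⟨p', _⟩ => ⟨p'.comp p, by rw [Quiver.Path.length_comp]; omega⟩⟩
  have : Std.Irrefl fun k j : V => ∃ p : Quiver.Path j k, 0 < p.length :=
    ⟨fun j ⟨p, hp⟩ => hp.ne' (hV.2.2 j p)⟩
  exact Finite.wellFounded_of_trans_of_irrefl _

namespace QuivRep

variable {R : Type} [Ring R] {V : Type} [Quiver.{1} V]

section Hom

variable {M N : QuivRep R V}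

def homMk (c : ∀ j, M.vtx j →ₗ[R] N.vtx j)
    (hc : ∀ {i k : V} (a : i ⟶ k), c k ∘ₗ (M.arrowMap a).hom = (N.arrowMap a).hom ∘ₗ c i) :
    M ⟶ N where
  app j := ModuleCat.ofHom (c j)
  naturality _ _ p := by
    induction p using Paths.induction with
    | id => rw [M.map_id, N.map_id, Category.id_comp, Category.comp_id]
    | comp p a ih =>
      have ha : M.map ((Paths.of V).map a) ≫ ModuleCat.ofHom (c _) =
          ModuleCat.ofHom (c _) ≫ N.map ((Paths.of V).map a) :=
        ModuleCat.hom_ext (hc a)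
      rw [M.map_comp, N.map_comp, Category.assoc]
      erw [ha, reassoc_of% ih]

theorem app_comp_arrowMap (f : M ⟶ N) {i k : V} (a : i ⟶ k) :
    app f k ∘ₗ (M.arrowMap a).hom = (N.arrowMap a).hom ∘ₗ app f i :=
  congrArg ModuleCat.Hom.hom (f.naturality _)

theorem hom_ext {f g : M ⟶ N} (h : ∀ j, app f j = app g j) : f = g :=
  NatTrans.ext (funext fun j => ModuleCat.hom_ext (h j))

end Hom

theorem exists_lift_at_vertex [IsNoetherianRing R] [Module.Injective R R] {X Y M : QuivRep R V}
    (hM : M.IsRIFibrant) (ι : X ⟶ Y) (q : X ⟶ M) {j : V} (hιj : Function.Injective (app ι j))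
    (hst : IsStableEquiv R (app ι j)) (F : ∀ k, Y.vtx k →ₗ[R] M.vtx k)
    (hF : ∀ k (_ : j ⟶ k), F k ∘ₗ app ι k = app q k) :
    ∃ φ : Y.vtx j →ₗ[R] M.vtx j, φ ∘ₗ app ι j = app q j ∧
      ∀ k (a : j ⟶ k), (M.arrowMap a).hom ∘ₗ φ = F k ∘ₗ (Y.arrowMap a).hom := by
  have hsq : LinearMap.pi (fun a : Σ k, j ⟶ k => (M.arrowMap a.2).hom) ∘ₗ app q j =
      LinearMap.pi (fun a : Σ k, j ⟶ k => F a.1 ∘ₗ (Y.arrowMap a.2).hom) ∘ₗ app ι j := by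
    simp only [LinearMap.pi_comp]
    congr 1
    funext ⟨k, a⟩
    rw [← app_comp_arrowMap, ← hF k a, LinearMap.comp_assoc, app_comp_arrowMap,
      LinearMap.comp_assoc]
  obtain ⟨φ, hφι, hφ⟩ := hst.exists_lift hιj _ (hM j) _ _ hsq
  exact ⟨φ, hφι, fun k a => LinearMap.ext fun y => congrFun (LinearMap.congr_fun hφ y) ⟨k, a⟩⟩

theorem exists_lift_of_isRIFibrant [IsNoetherianRing R] [Module.Injective R R]
    (hV : IsFiniteAcyclic V) {X Y M : QuivRep R V} (hM : M.IsRIFibrant) (ι : X ⟶ Y)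
    (hι : ∀ j, Function.Injective (app ι j) ∧ IsStableEquiv R (app ι j)) (q : X ⟶ M) :
    ∃ h : Y ⟶ M, ι ≫ h = q := by
  obtain ⟨H, hH⟩ := hV.wellFounded.exists_family_of_forall_exists
    (β := fun j => Y.vtx j →ₗ[R] M.vtx j)
    (fun j F φ => φ ∘ₗ app ι j = app q j ∧ ∀ k (a : j ⟶ k),
      (M.arrowMap a).hom ∘ₗ φ = F k ⟨a.toPath, by simp⟩ ∘ₗ (Y.arrowMap a).hom)
    (fun j F hF => exists_lift_at_vertex hM ι q (hι j).1 (hι j).2 F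
      fun k a => (hF k ⟨a.toPath, by simp⟩).1)
  exact ⟨homMk H fun a => ((hH _).2 _ a).symm, hom_ext fun j => (hH j).1⟩

noncomputable def extendByFree (M : QuivRep R V) (c : ∀ {i k : V}, (i ⟶ k) → M.vtx k) :
    QuivRep R V :=
  Paths.lift
    { obj i := ModuleCat.of R (M.vtx i × R)
      map a := ModuleCat.ofHom (LinearMap.inl R _ R ∘ₗ
        LinearMap.coprod (M.arrowMap a).hom (LinearMap.toSpanSingleton R _ (c a))) }

variable (M : QuivRep R V) (c : ∀ {i k : V}, (i ⟶ k) → M.vtx k)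

theorem extendByFree_arrowMap_apply {i k : V} (a : i ⟶ k) (x : M.vtx i) (t : R) :
    ((M.extendByFree c).arrowMap a).hom (x, t) = ((M.arrowMap a).hom x + t • c a, 0) :=
  rfl

noncomputable def inlExtendByFree : M ⟶ M.extendByFree c :=
  homMk (fun i => LinearMap.inl R (M.vtx i) R) fun a => LinearMap.ext fun x => by
    erw [LinearMap.comp_apply, LinearMap.comp_apply, extendByFree_arrowMap_apply, zero_smul,
      add_zero]
    rfl

theorem arrowMap_apply_of_retraction (h : M.extendByFree c ⟶ M)
    (hh : M.inlExtendByFree c ≫ h = 𝟙 M) {i k : V} (a : i ⟶ k) :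
    (M.arrowMap a).hom (app h i ((0 : M.vtx i), (1 : R))) = c a := by
  erw [← LinearMap.comp_apply, ← app_comp_arrowMap, LinearMap.comp_apply,
    extendByFree_arrowMap_apply, map_zero, zero_add, one_smul]
  exact LinearMap.congr_fun (congrArg (app · k) hh) (c a)

theorem injective_app_inlExtendByFree (i : V) :
    Function.Injective (app (M.inlExtendByFree c) i) :=
  LinearMap.inl_injective (R := R) (M := M.vtx i) (M₂ := R)

theorem isStableEquiv_app_inlExtendByFree (i : V) :
    IsStableEquiv R (app (M.inlExtendByFree c) i) :=
  isStableEquiv_inl (M.vtx i) R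

theorem isRIFibrant_of_forall_exists_lift
    (hext : ∀ (X Y : QuivRep R V) (ι : X ⟶ Y),
      (∀ j, Function.Injective (app ι j) ∧ IsStableEquiv R (app ι j)) →
      ∀ q : X ⟶ M, ∃ h : Y ⟶ M, ι ≫ h = q) :
    M.IsRIFibrant := by
  classical
  intro j n
  let c : ∀ {i k : V}, (i ⟶ k) → M.vtx k := fun {i k} a =>
    if hi : i = j then n ⟨k, hi ▸ a⟩ else 0
  obtain ⟨h, hh⟩ := hext M _ (M.inlExtendByFree c)
    (fun i => ⟨injective_app_inlExtendByFree M c i, isStableEquiv_app_inlExtendByFree M c i⟩)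
    (𝟙 M)
  refine ⟨app h j ((0 : M.vtx j), (1 : R)), funext fun a => ?_⟩
  simpa [c] using arrowMap_apply_of_retraction M c h hh a.2

end QuivRep

/-- Over a quasi-Frobenius ring and a finite acyclic quiver, a representation `M` is RI-fibrant
if and only if it has the extension property against all morphisms that are pointwise
injective stable equivalences. -/
theorem isRIFibrant_iff_extensionProperty
    (R : Type) [Ring R] [IsQuasiFrobenius R]
    {V : Type} [Quiver.{1} V] (hV : IsFiniteAcyclic V)
    (M : QuivRep R V) :
    M.IsRIFibrant ↔
      ∀ (X Y : QuivRep R V) (ι : X ⟶ Y),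
        (∀ j : V, Function.Injective (QuivRep.app ι j) ∧ IsStableEquiv R (QuivRep.app ι j)) →
        ∀ q : X ⟶ M, ∃ h : Y ⟶ M, ι ≫ h = q := by
  have := IsQuasiFrobenius.noetherian_left (R := R)
  have := IsQuasiFrobenius.selfInjective_left (R := R)
  exact ⟨fun hM X Y ι hι q => QuivRep.exists_lift_of_isRIFibrant hV hM ι hι q,
    QuivRep.isRIFibrant_of_forall_exists_lift M⟩
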